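/- Let b > 0, t > 0 be reals, p ≥ 1 an integer, η > 0 a real, and N ≥ 1 an integer. Set K := ⌊ηN/(2π)⌋. Then (4π/N) · ∑_{k=1}^{K} exp(−t·b·(2πk/N)^{2p}) ≤ (1/p) · Γ(1/(2p)) · (t·b)^{−1/(2p)}. -/

import Mathlib

/-!
Writing `h = 2π/N`, the sum is `∑_{k=1}^K exp(-c k^{2p})` with `c = t b h^{2p}`. Since
`x ↦ exp(-c x^{2p})` is decreasing on `[0, ∞)`, the sum is dominated by
`∫₀^∞ exp(-c x^{2p}) dx = c^{-1/(2p)} Γ(1/(2p) + 1)`, whatever `K` is. The factor `h⁻¹` in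
`c^{-1/(2p)}` cancels the prefactor `4π/N = 2h`, and `Γ(s + 1) = s Γ(s)` gives the constant.
-/

open Real MeasureTheory

theorem AntitoneOn.sum_Icc_le_integral_Ioi {f : ℝ → ℝ} (hf : AntitoneOn f (Set.Ici 0))
    (hf_nonneg : ∀ x, 0 ≤ f x) (hf_int : IntegrableOn f (Set.Ioi 0)) (n : ℕ) :
    ∑ k ∈ Finset.Icc 1 n, f k ≤ ∫ x in Set.Ioi 0, f x :=
  calc ∑ k ∈ Finset.Icc 1 n, f k = ∑ i ∈ Finset.range n, f (0 + ↑(i + 1)) := by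
        rw [← Finset.Ico_add_one_right_eq_Icc, Finset.sum_Ico_eq_sum_range, Nat.add_sub_cancel]
        simp only [zero_add, add_comm 1]
    _ ≤ ∫ x in (0 : ℝ)..0 + n, f x :=
        (hf.mono fun _ hx => hx.1).sum_le_integral
    _ ≤ ∫ x in Set.Ioi 0, f x := by
        rw [zero_add, intervalIntegral.integral_of_le n.cast_nonneg]
        exact setIntegral_mono_set hf_int (.of_forall fun x => hf_nonneg x)
          Set.Ioc_subset_Ioi_self.eventuallyLE

theorem sum_exp_neg_mul_rpow_le {c q : ℝ} (hc : 0 < c) (hq : 0 < q) (n : ℕ) :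
    ∑ k ∈ Finset.Icc 1 n, exp (-c * (k : ℝ) ^ q) ≤ c ^ (-1 / q) * Gamma (1 / q + 1) := by
  have hanti : AntitoneOn (fun x : ℝ => exp (-c * x ^ q)) (Set.Ici 0) := fun x hx y _ hxy => by
    simp only [neg_mul, exp_le_exp, neg_le_neg_iff]
    gcongr
  have hint : IntegrableOn (fun x : ℝ => exp (-c * x ^ q)) (Set.Ioi 0) := by
    simpa using integrableOn_rpow_mul_exp_neg_mul_rpow (s := 0) neg_one_lt_zero hq hc
  rw [← integral_exp_neg_mul_rpow hq hc]
  exact hanti.sum_Icc_le_integral_Ioi (fun _ => (exp_pos _).le) hint n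

theorem small_eigenvalue_heat_sum_bound_general (b t η : ℝ) (hb : 0 < b) (ht : 0 < t)
    (p : ℕ) (hp : 1 ≤ p) (N : ℕ) (hN : 1 ≤ N) :
    (4 * Real.pi / N) *
        ∑ k ∈ Finset.Icc 1 ⌊η * N / (2 * Real.pi)⌋₊,
          Real.exp (-(t * b * (2 * Real.pi * k / N) ^ (2 * p))) ≤
      (1 / p) * Real.Gamma (1 / (2 * p)) * (t * b) ^ (-(1 / (2 * (p : ℝ)))) := by
  have hN₀ : (0 : ℝ) < N := by exact_mod_cast hN
  have hq : (0 : ℝ) < 2 * p := by positivity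
  set h := 2 * π / N with h_def
  have hh : 0 < h := by positivity
  set c := t * b * h ^ (2 * p : ℝ) with hc_def
  have hc : 0 < c := by positivity
  have hterm (k : ℕ) : exp (-(t * b * (2 * π * k / N) ^ (2 * p))) =
      exp (-c * (k : ℝ) ^ (2 * p : ℝ)) := by
    rw [hc_def, ← Nat.cast_ofNat, ← Nat.cast_mul, rpow_natCast, rpow_natCast, h_def]
    ring_nf
  have hscale : c ^ (-1 / (2 * p : ℝ)) = (t * b) ^ (-(1 / (2 * (p : ℝ)))) * h⁻¹ := by
    rw [hc_def, mul_rpow (by positivity) (by positivity), ← rpow_mul hh.le,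
      mul_div_cancel₀ _ hq.ne', rpow_neg_one, neg_div]
  calc (4 * π / N) * ∑ k ∈ Finset.Icc 1 ⌊η * N / (2 * π)⌋₊,
        exp (-(t * b * (2 * π * k / N) ^ (2 * p)))
      ≤ 2 * h * (c ^ (-1 / (2 * p : ℝ)) * Gamma (1 / (2 * p) + 1)) := by
        simp only [hterm]
        rw [show 4 * π / N = 2 * h by rw [h_def]; ring]
        gcongr
        exact sum_exp_neg_mul_rpow_le hc hq _
    _ = (1 / p) * Gamma (1 / (2 * p)) * (t * b) ^ (-(1 / (2 * (p : ℝ)))) := by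
        rw [hscale, Gamma_add_one (by positivity)]
        field_simp

theorem small_eigenvalue_heat_sum_bound (b t η : ℝ) (hb : 0 < b) (ht : 0 < t) (hη : 0 < η)
    (p : ℕ) (hp : 1 ≤ p) (N : ℕ) (hN : 1 ≤ N) :
    (4 * Real.pi / N) *
        ∑ k ∈ Finset.Icc 1 ⌊η * N / (2 * Real.pi)⌋₊,
          Real.exp (-(t * b * (2 * Real.pi * k / N) ^ (2 * p))) ≤
      (1 / p) * Real.Gamma (1 / (2 * p)) * (t * b) ^ (-(1 / (2 * (p : ℝ)))) :=
  small_eigenvalue_heat_sum_bound_general b t η hb ht p hp N hN
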